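/- Let n ≥ 2 and 1 ≤ k ≤ n−1. Let λ₁ ≥ λ₂ ≥ … ≥ λ_n > 0, set κ_α = 1/λ_α and F^{αα} = σ_{k−1}(κ|α)·κ_α²/σ_k(κ)². Then for every symmetric n×n real matrix ξ: Σ_{α≥2} F^{αα}·ξ_{α1}²/λ₁ ≥ Σ_{α≥2} F^{11}·ξ_{1α}²/λ_α. -/

import Mathlib

/-!
Compare the two sums term by term. After cancelling the common factor `κ₁ κ_α ξ_{1α}² / σ_k(κ)²`
the claim becomes `κ₁ σ_{k-1}(κ|1) ≤ κ_α σ_{k-1}(κ|α)`. Expanding each side along the other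
deleted index gives `σ_{k-1}(κ|1) = P + κ_α Q` and `σ_{k-1}(κ|α) = P + κ₁ Q`, where `P` and `Q` are
`σ_{k-1}` and `σ_{k-2}` of `κ` with both entries deleted. So the difference is `(κ_α - κ₁) P ≥ 0`.
-/

open scoped Classical

noncomputable section

/-- The `j`-th elementary symmetric function of the family `κ` restricted to the
finite index set `s`; it is `1` for `j = 0`, and `0` for `j < 0` (or for `j`
larger than the cardinality of `s`). -/
def sigmaE {ι : Type*} (s : Finset ι) (j : ℤ) (κ : ι → ℝ) : ℝ :=
  if 0 ≤ j then ∑ t ∈ s.powersetCard j.toNat, ∏ i ∈ t, κ i else 0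

/-- `σ_j(κ)`, the `j`-th elementary symmetric polynomial evaluated at `κ`. -/
def sigmaV {ι : Type*} [Fintype ι] (j : ℤ) (κ : ι → ℝ) : ℝ :=
  sigmaE Finset.univ j κ

/-- `σ_j(κ|α)`: `σ_j` of `κ` with the `α`-th entry deleted. -/
def sigmaV1 {ι : Type*} [Fintype ι] [DecidableEq ι] (j : ℤ) (κ : ι → ℝ) (α : ι) : ℝ :=
  sigmaE (Finset.univ.erase α) j κ

/-- `σ_j(κ|αβ)`: `σ_j` of `κ` with the `α`-th and `β`-th entries deleted. -/
def sigmaV2 {ι : Type*} [Fintype ι] [DecidableEq ι] (j : ℤ) (κ : ι → ℝ) (α β : ι) : ℝ :=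
  sigmaE ((Finset.univ.erase α).erase β) j κ

/-- `σ_j(A)` for a real `n × n` matrix `A`: the `j`-th elementary symmetric function of
the eigenvalues of `A` when `A` is symmetric (= Hermitian over `ℝ`), junk value `0`
otherwise. -/
def sigmaMat {n : ℕ} (j : ℤ) (A : Matrix (Fin n) (Fin n) ℝ) : ℝ :=
  if h : A.IsHermitian then sigmaV j h.eigenvalues else 0

/-- The Hessian quotient operator `F(A) = σ_n(A)/σ_{n-k}(A)`. -/
def Fquot {n : ℕ} (k : ℕ) (A : Matrix (Fin n) (Fin n) ℝ) : ℝ :=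
  sigmaMat (n : ℤ) A / sigmaMat ((n : ℤ) - (k : ℤ)) A

theorem Multiset.esymm_cons_succ {R : Type*} [CommSemiring R] (a : R) (s : Multiset R) (n : ℕ) :
    (a ::ₘ s).esymm (n + 1) = s.esymm (n + 1) + a * s.esymm n := by
  simp [Multiset.esymm, Multiset.map_map, Multiset.sum_map_mul_left]

lemma sigmaE_natCast_eq_esymm {ι : Type*} (s : Finset ι) (m : ℕ) (κ : ι → ℝ) :
    sigmaE s m κ = (s.val.map κ).esymm m := by
  simp [sigmaE, Finset.esymm_map_val]

lemma sigmaE_nonneg {ι : Type*} {s : Finset ι} (j : ℤ) {κ : ι → ℝ}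
    (hκ : ∀ i ∈ s, 0 ≤ κ i) : 0 ≤ sigmaE s j κ := by
  unfold sigmaE
  split_ifs
  · exact Finset.sum_nonneg fun t ht =>
      Finset.prod_nonneg fun i hi => hκ i ((Finset.mem_powersetCard.mp ht).1 hi)
  · exact le_rfl

lemma sigmaE_eq_add_mul_sigmaE_erase {ι : Type*} [DecidableEq ι] {s : Finset ι} {i : ι}
    (hi : i ∈ s) (j : ℤ) (κ : ι → ℝ) :
    sigmaE s j κ = sigmaE (s.erase i) j κ + κ i * sigmaE (s.erase i) (j - 1) κ := by
  rcases lt_trichotomy j 0 with hj | rfl | hj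
  · simp [sigmaE, hj.not_ge, show ¬ 1 ≤ j by omega]
  · simp [sigmaE]
  obtain ⟨m, rfl⟩ : ∃ m : ℕ, j = m + 1 := ⟨(j - 1).toNat, by omega⟩
  have hs : s.val.map κ = κ i ::ₘ (s.erase i).val.map κ := by
    rw [← Multiset.map_cons, Finset.erase_val, Multiset.cons_erase hi]
  rw [add_sub_cancel_right, ← Nat.cast_succ, sigmaE_natCast_eq_esymm, sigmaE_natCast_eq_esymm,
    sigmaE_natCast_eq_esymm, hs, Multiset.esymm_cons_succ]

lemma mul_sigmaV1_le_mul_sigmaV1 {ι : Type*} [Fintype ι] [DecidableEq ι] (j : ℤ) {κ : ι → ℝ}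
    (hκ : ∀ i, 0 ≤ κ i) {a b : ι} (hab : κ a ≤ κ b) :
    κ a * sigmaV1 j κ a ≤ κ b * sigmaV1 j κ b := by
  rcases eq_or_ne a b with rfl | hne
  · exact le_rfl
  set P := sigmaE ((Finset.univ.erase a).erase b) j κ
  set Q := sigmaE ((Finset.univ.erase a).erase b) (j - 1) κ
  have ha : sigmaV1 j κ a = P + κ b * Q :=
    sigmaE_eq_add_mul_sigmaE_erase (Finset.mem_erase.mpr ⟨hne.symm, Finset.mem_univ b⟩) j κ
  have hb : sigmaV1 j κ b = P + κ a * Q := by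
    rw [sigmaV1, sigmaE_eq_add_mul_sigmaE_erase (Finset.mem_erase.mpr ⟨hne, Finset.mem_univ a⟩),
      Finset.erase_right_comm]
  have hP : κ a * P ≤ κ b * P := mul_le_mul_of_nonneg_right hab (sigmaE_nonneg j fun i _ => hκ i)
  rw [ha, hb]
  linear_combination hP

/-- inequality (2.30), `J₁ ≥ J₂`: with `λ₁ ≥ ⋯ ≥ λ_n > 0`,
`κ_α = 1/λ_α`, `F^{αα} = σ_{k-1}(κ|α)κ_α²/σ_k(κ)²`, for every symmetric `ξ`:
`Σ_{α≥2} F^{αα} ξ_{α1}²/λ₁ ≥ Σ_{α≥2} F^{11} ξ_{1α}²/λ_α`. -/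
theorem stmt_11 (n k : ℕ) (hn : 2 ≤ n)
    (lam : Fin n → ℝ) (hpos : ∀ α, 0 < lam α) (hord : ∀ α β : Fin n, α ≤ β → lam β ≤ lam α)
    (ξ : Matrix (Fin n) (Fin n) ℝ) (hξ : ξ.IsSymm) :
    let i0 : Fin n := ⟨0, by omega⟩
    let κ : Fin n → ℝ := fun α => (lam α)⁻¹
    let Fd : Fin n → ℝ := fun α => sigmaV1 ((k : ℤ) - 1) κ α * (κ α) ^ 2 / (sigmaV (k : ℤ) κ) ^ 2
    ∑ α ∈ Finset.univ.erase i0, Fd α * (ξ α i0) ^ 2 / lam i0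
      ≥ ∑ α ∈ Finset.univ.erase i0, Fd i0 * (ξ i0 α) ^ 2 / lam α := by
  intro i0 κ Fd
  refine Finset.sum_le_sum fun α _ => ?_
  have hκ_nonneg (β : Fin n) : 0 ≤ κ β := (inv_pos.mpr (hpos β)).le
  have hκ : κ i0 ≤ κ α := inv_anti₀ (hpos α) (hord i0 α (Nat.zero_le α.val))
  set w := κ i0 * κ α * ξ i0 α ^ 2 / sigmaV (k : ℤ) κ ^ 2
  have hw : 0 ≤ w := by have := hκ_nonneg i0; have := hκ_nonneg α; positivity
  calc Fd i0 * ξ i0 α ^ 2 / lam α = κ i0 * sigmaV1 ((k : ℤ) - 1) κ i0 * w := by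
        simp only [Fd, w, κ]; ring
    _ ≤ κ α * sigmaV1 ((k : ℤ) - 1) κ α * w :=
        mul_le_mul_of_nonneg_right (mul_sigmaV1_le_mul_sigmaV1 _ hκ_nonneg hκ) hw
    _ = Fd α * ξ α i0 ^ 2 / lam i0 := by
        simp only [Fd, w, κ, hξ.apply]; ring
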